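/- arXiv:2110.06890 — 4 statements merged into one kernel-verified Lean document; each statement's English description precedes it below -/
import Mathlib

section
/- Traditional equivalence of agents is an equivalence relation (reflexive, symmetric, and transitive). -/
/-- Alternating history x₁y₁...xₙ ending in a percept: the first percept
    together with the list of subsequent (action, percept) pairs. -/
abbrev Hist (P A : Type*) := P × List (A × P)

/-- An agent maps nonempty alternating percept-action histories
    (ending in a percept) to actions. -/
abbrev Agent (P A : Type*) := Hist P A → A

/-- `h` is possible for `π`: for all 1 ≤ i < n, π(x₁y₁...xᵢ) = yᵢ. -/
def Possible {P A : Type*} (π : Agent P A) (h : Hist P A) : Prop :=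
  ∀ i, (hi : i < h.2.length) → π (h.1, h.2.take i) = (h.2.get ⟨i, hi⟩).1

/-- π₁ and π₂ are traditionally equivalent: they agree on every sequence
    possible for π₁. -/
def TradEquiv {P A : Type*} (π₁ π₂ : Agent P A) : Prop :=
  ∀ h : Hist P A, Possible π₁ h → π₁ h = π₂ h

/-! Reflexivity and transitivity are immediate once equivalent agents have the same possible
histories. For the converse inclusion, a history possible for π₂ is shown possible for π₁ prefix
by prefix: each prefix is already possible for π₁, so π₁ agrees with π₂ there. -/

section

variable {P A : Type*} {π π₁ π₂ : Agent P A} {h : Hist P A}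

lemma possible_take_of_forall_lt {i : ℕ}
    (H : ∀ j < i, ∀ hj : j < h.2.length, π (h.1, h.2.take j) = (h.2.get ⟨j, hj⟩).1) :
    Possible π (h.1, h.2.take i) := by
  intro j hj
  rw [List.length_take, lt_min_iff] at hj
  simpa [List.take_take, Nat.min_eq_left hj.1.le, List.getElem_take] using H j hj.1 hj.2

lemma Possible.take (hp : Possible π h) (i : ℕ) : Possible π (h.1, h.2.take i) :=
  possible_take_of_forall_lt fun j _ hj => hp j hj

lemma TradEquiv.possible_iff (he : TradEquiv π₁ π₂) : Possible π₁ h ↔ Possible π₂ h := by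
  refine ⟨fun hp i hi => ?_, fun hp i => ?_⟩
  · rw [← he _ (hp.take i)]
    exact hp i hi
  · induction i using Nat.strong_induction_on with
    | _ i ih =>
      intro hi
      rw [he _ (possible_take_of_forall_lt ih)]
      exact hp i hi

end

theorem tradEquiv_equivalence_general {P A : Type*} :
    Equivalence (fun π₁ π₂ : Agent P A => TradEquiv π₁ π₂) :=
  ⟨fun _ _ _ => rfl,
    fun he h hp => (he h (he.possible_iff.mpr hp)).symm,
    fun h₁₂ h₂₃ h hp => (h₁₂ h hp).trans (h₂₃ h (h₁₂.possible_iff.mp hp))⟩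

/-- Traditional equivalence is an equivalence relation. -/
theorem tradEquiv_equivalence {P A : Type*} [Fintype P] [Fintype A] :
    Equivalence (fun π₁ π₂ : Agent P A => TradEquiv π₁ π₂) :=
  tradEquiv_equivalence_general
end

section
/- There exist an extended environment μ and two agents π₁, π₂ that are traditionally equivalent but such that the total reward V^{π₁}_μ obtained by π₁ interacting with μ differs from V^{π₂}_μ. Concretely: with observations including a fixed o, rewards in {0,1}, and distinct actions a ≠ b, let μ output initial percept (1,o) if π(⟨(0,o), b, (0,o)⟩) = a and (0,o) otherwise, and output (0,o) at every subsequent step. Let π₁ always output a, and let π₂ output b on input ⟨(0,o), b, (0,o)⟩ and a on all other inputs. Then π₁ and π₂ are traditionally equivalent, yet V^{π₁}_μ = 1 and V^{π₂}_μ = 0. -/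
/-- An extended environment maps an agent together with an even-length
    history x₁y₁...xₙyₙ (encoded as `none` for the empty history, or
    `some (x₁y₁...xₙ, yₙ)`) to the next percept. -/
abbrev ExtEnv (P A : Type*) := Agent P A → Option (Hist P A × A) → P

/-- The history x₁y₁...xₙ₊₁ of the interaction of π with μ after n actions:
    x₁ = μ(π, ⟨⟩), yₙ = π(x₁y₁...xₙ), xₙ₊₁ = μ(π, x₁y₁...xₙyₙ). -/
def ihistExt {P A : Type*} (μ : ExtEnv P A) (π : Agent P A) : ℕ → Hist P A
  | 0 => (μ π none, [])
  | n+1 =>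
    let h := ihistExt μ π n
    (h.1, h.2 ++ [(π h, μ π (some (h, π h)))])

/-- The last percept xₙ₊₁ of a history x₁y₁...xₙ₊₁. -/
def lastPercept {P A : Type*} (h : Hist P A) : P :=
  (h.2.getLast?.map Prod.snd).getD h.1

/-! In `μ` only the first percept depends on the agent, through its action on the
counterfactual history ⟨(0,o), b, (0,o)⟩, and every later percept has reward 0. That history
is not possible for the constant agent `π₁`, so `π₂` may answer `b` there while remaining
traditionally equivalent to `π₁`; but `μ` consults exactly that answer, so `π₁` collects
reward 1 and `π₂` nothing. -/

section Interaction

variable {P A : Type*}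

theorem possible_const_iff (a : A) (h : Hist P A) :
    Possible (fun _ => a) h ↔ ∀ p ∈ h.2, p.1 = a := by
  rw [List.forall_mem_iff_getElem]
  exact ⟨fun hp i hi => (hp i hi).symm, fun hp i hi => (hp i hi).symm⟩

theorem tradEquiv_const_iff (a : A) (π : Agent P A) :
    TradEquiv (fun _ => a) π ↔ ∀ h : Hist P A, (∀ p ∈ h.2, p.1 = a) → π h = a := by
  simp only [TradEquiv, possible_const_iff, eq_comm (a := a)]

theorem lastPercept_ihistExt_succ (μ : ExtEnv P A) (π : Agent P A) (n : ℕ) :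
    lastPercept (ihistExt μ π (n + 1)) =
      μ π (some (ihistExt μ π n, π (ihistExt μ π n))) := by
  simp [ihistExt, lastPercept]

end Interaction

theorem hasSum_reward_of_reward_some_eq_zero {R O A : Type*}
    [AddCommMonoid R] [TopologicalSpace R]
    (μ : ExtEnv (R × O) A) (π : Agent (R × O) A) (hμ : ∀ x, (μ π (some x)).1 = 0) :
    HasSum (fun n => (lastPercept (ihistExt μ π n)).1) (μ π none).1 := by
  refine hasSum_single 0 fun n hn => ?_
  obtain ⟨m, rfl⟩ := Nat.exists_eq_succ_of_ne_zero hn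
  rw [lastPercept_ihistExt_succ, hμ]

theorem tradEquiv_different_value_general {O A : Type*}
    [DecidableEq O] [DecidableEq A]
    (o : O) (a b : A) (hab : a ≠ b) :
    let μ : ExtEnv (ℚ × O) A := fun π oh =>
      oh.elim (if π (((0 : ℚ), o), [(b, ((0 : ℚ), o))]) = a
               then ((1 : ℚ), o) else ((0 : ℚ), o))
        (fun _ => ((0 : ℚ), o))
    let π₁ : Agent (ℚ × O) A := fun _ => a
    let π₂ : Agent (ℚ × O) A := fun h =>
      if h = (((0 : ℚ), o), [(b, ((0 : ℚ), o))]) then b else a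
    TradEquiv π₁ π₂ ∧
      HasSum (fun n => (lastPercept (ihistExt μ π₁ n)).1) (1 : ℚ) ∧
      HasSum (fun n => (lastPercept (ihistExt μ π₂ n)).1) (0 : ℚ) := by
  intro μ π₁ π₂
  have hμ : ∀ π x, (μ π (some x)).1 = 0 := fun _ _ => rfl
  refine ⟨?_, ?_, ?_⟩
  · refine (tradEquiv_const_iff a π₂).2 fun h hh => if_neg ?_
    rintro rfl
    exact hab (hh _ (List.mem_singleton_self _)).symm
  · simpa [μ, π₁] using hasSum_reward_of_reward_some_eq_zero μ π₁ (hμ π₁)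
  · simpa [μ, π₂, hab.symm] using hasSum_reward_of_reward_some_eq_zero μ π₂ (hμ π₂)

/-- Traditionally equivalent agents can obtain different total rewards in an
    extended environment. -/
theorem tradEquiv_different_value {O A : Type*}
    [Fintype O] [Fintype A] [DecidableEq O] [DecidableEq A]
    (o : O) (a b : A) (hab : a ≠ b) :
    let μ : ExtEnv (ℚ × O) A := fun π oh =>
      oh.elim (if π (((0 : ℚ), o), [(b, ((0 : ℚ), o))]) = a
               then ((1 : ℚ), o) else ((0 : ℚ), o))
        (fun _ => ((0 : ℚ), o))
    let π₁ : Agent (ℚ × O) A := fun _ => a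
    let π₂ : Agent (ℚ × O) A := fun h =>
      if h = (((0 : ℚ), o), [(b, ((0 : ℚ), o))]) then b else a
    TradEquiv π₁ π₂ ∧
      HasSum (fun n => (lastPercept (ihistExt μ π₁ n)).1) (1 : ℚ) ∧
      HasSum (fun n => (lastPercept (ihistExt μ π₂ n)).1) (0 : ℚ) :=
  tradEquiv_different_value_general o a b hab
end

section
/- (Idempotence of Reality Check) For every agent π, the reality check of the reality check of π equals the reality check of π: (π_RC)_RC = π_RC. -/
/-- Auxiliary recursion for the reality check. -/
def RCAux {P A : Type*} [DecidableEq A] (π : Agent P A) (x : P) (l : List (A × P)) : A :=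
  if (∀ i, (hi : i < l.length) → RCAux π x (l.take i) = (l.get ⟨i, hi⟩).1)
  then π (x, l) else π (x, [])
termination_by l.length
decreasing_by all_goals (simp [List.length_take]; omega)

/-- The reality check π_RC of π: π_RC(s) = π(s) if s is possible for π_RC,
    else π_RC(s) = π(⟨x₁⟩). -/
def RC {P A : Type*} [DecidableEq A] (π : Agent P A) : Agent P A :=
  fun h => RCAux π h.1 h.2

theorem possible_congr {P A : Type*} {π π' : Agent P A} {h : Hist P A}
    (heq : ∀ i < h.2.length, π (h.1, h.2.take i) = π' (h.1, h.2.take i)) :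
    Possible π h ↔ Possible π' h :=
  forall₂_congr fun i hi => by rw [heq i hi]

section RealityCheck

variable {P A : Type*} [DecidableEq A]

theorem RC_apply_of_possible {π : Agent P A} {h : Hist P A} (hp : Possible (RC π) h) :
    RC π h = π h := by
  rw [RC, RCAux]
  exact if_pos hp

theorem RC_apply_of_not_possible {π : Agent P A} {h : Hist P A} (hp : ¬Possible (RC π) h) :
    RC π h = π (h.1, []) := by
  rw [RC, RCAux]
  exact if_neg hp

theorem RC_apply_nil (π : Agent P A) (x : P) : RC π (x, []) = π (x, []) :=
  RC_apply_of_possible fun _ hi => absurd hi (Nat.not_lt_zero _)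

/-- By strong induction on the length of `h`, `RC (RC π)` and `RC π` agree on the proper
prefixes of `h`, so they find `h` possible at the same time; off the possible histories both
fall back to `π (h.1, [])`. -/
theorem RC_RC_apply (π : Agent P A) (h : Hist P A) : RC (RC π) h = RC π h := by
  have hprefix : ∀ i < h.2.length, RC (RC π) (h.1, h.2.take i) = RC π (h.1, h.2.take i) :=
    fun i _ => RC_RC_apply π (h.1, h.2.take i)
  by_cases hp : Possible (RC π) h
  · exact RC_apply_of_possible ((possible_congr hprefix).2 hp)
  · rw [RC_apply_of_not_possible (mt (possible_congr hprefix).1 hp),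
      RC_apply_of_not_possible hp, RC_apply_nil]
termination_by h.2.length
decreasing_by simp only [List.length_take]; omega

end RealityCheck

theorem realityCheck_idempotent_general {P A : Type*} [DecidableEq A]
    (π : Agent P A) : RC (RC π) = RC π :=
  funext (RC_RC_apply π)

/-- Idempotence of Reality Check: (π_RC)_RC = π_RC. -/
theorem realityCheck_idempotent {P A : Type*} [Fintype P] [Fintype A] [DecidableEq A]
    (π : Agent P A) : RC (RC π) = RC π :=
  realityCheck_idempotent_general π
end

section
/- (Equivalence on genuine history) For every agent π, every extended environment μ, and every odd-length initial segment x₁y₁...xₙ of the result of π_RC interacting with μ, one has π_RC(x₁y₁...xₙ) = π(x₁y₁...xₙ). -/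
/-! An interaction history records, at each step, the action the agent itself chose, so it is
possible for that agent. For `RC π` this is exactly the condition under which `RC π` defers to `π`. -/

theorem Possible.snoc {P A : Type*} {σ : Agent P A} {h : Hist P A} (hσ : Possible σ h) (x : P) :
    Possible σ (h.1, h.2 ++ [(σ h, x)]) := by
  intro i hi
  rw [List.length_append, List.length_singleton, Nat.lt_succ_iff] at hi
  rcases hi.lt_or_eq with hi | rfl
  · simpa [List.take_append_of_le_length hi.le, List.getElem_append_left hi] using hσ i hi
  · simp

theorem possible_ihistExt {P A : Type*} (μ : ExtEnv P A) (σ : Agent P A) (n : ℕ) :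
    Possible σ (ihistExt μ σ n) := by
  induction n with
  | zero => intro i hi; simp [ihistExt] at hi
  | succ n ih => exact ih.snoc _

theorem RC_eq_of_possible {P A : Type*} [DecidableEq A] (π : Agent P A) {h : Hist P A}
    (hh : Possible (RC π) h) : RC π h = π h := by
  rw [RC, RCAux]
  exact if_pos hh

theorem realityCheck_genuine_history_general {P A : Type*}
    [DecidableEq A]
    (π : Agent P A) (μ : ExtEnv P A) (n : ℕ) :
    RC π (ihistExt μ (RC π) n) = π (ihistExt μ (RC π) n) :=
  RC_eq_of_possible π (possible_ihistExt μ (RC π) n)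

/-- Equivalence on genuine history: on every odd-length initial segment of
    the result of π_RC interacting with an extended environment μ,
    π_RC agrees with π. -/
theorem realityCheck_genuine_history {P A : Type*}
    [Fintype P] [Fintype A] [DecidableEq A]
    (π : Agent P A) (μ : ExtEnv P A) (n : ℕ) :
    RC π (ihistExt μ (RC π) n) = π (ihistExt μ (RC π) n) :=
  realityCheck_genuine_history_general π μ n
end
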